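/- For any graph G and any threshold k, partitioning the vertices into V_k (the k-core vertex set) and V \ V_k, and computing coreness separately on the induced subgraph G_k and on the induced subgraph G_{!k} augmented with external information, assigns every vertex of G its correct coreness: the merged result map agrees with coreness_G on all of V. -/

import Mathlib

open scoped Classical
open Finset

noncomputable section

variable {V : Type*} [Fintype V]

/-- `S` induces a subgraph of `G` in which every vertex has degree at least `k`. -/
def IsCoreSet (G : SimpleGraph V) (k : ℕ) (S : Finset V) : Prop :=
  ∀ v ∈ S, k ≤ (S.filter (G.Adj v)).card

/-- The vertex set of the `k`-core of `G`: all vertices lying in some induced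
subgraph of minimum degree at least `k`. -/
def coreSet (G : SimpleGraph V) (k : ℕ) : Finset V :=
  Finset.univ.filter fun v => ∃ S : Finset V, IsCoreSet G k S ∧ v ∈ S

/-- The coreness of `v`: the largest `k` such that `v` belongs to the `k`-core. -/
def coreness (G : SimpleGraph V) (v : V) : ℕ :=
  Nat.findGreatest (fun k => v ∈ coreSet G k) (Fintype.card V)

/-- The external information of `v` w.r.t. the `k`-core: the number of
neighbors of `v` that belong to the `k`-core. -/
def extInfo (G : SimpleGraph V) (k : ℕ) (v : V) : ℕ :=
  ((coreSet G k).filter (G.Adj v)).card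

/-- The induced subgraph of `G` on a vertex subset `A` (vertices outside `A`
become isolated). -/
def restrictG (G : SimpleGraph V) (A : Finset V) : SimpleGraph V where
  Adj u w := G.Adj u w ∧ u ∈ A ∧ w ∈ A
  symm := ⟨fun _ _ h => ⟨h.1.symm, h.2.2, h.2.1⟩⟩
  loopless := ⟨fun u h => G.loopless.irrefl u h.1⟩

/-- `S ⊆ A` induces a subgraph in which every vertex `u` has degree plus
external information `E u` at least `s`. -/
def IsAugCoreSet (G : SimpleGraph V) (A : Finset V) (E : V → ℕ) (s : ℕ)
    (S : Finset V) : Prop :=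
  S ⊆ A ∧ ∀ u ∈ S, s ≤ E u + (S.filter (G.Adj u)).card

/-- The augmented coreness of `v` in the part `A`, with external information `E`:
the largest `s` such that `v` lies in an augmented `s`-core. -/
def augCoreness (G : SimpleGraph V) (A : Finset V) (E : V → ℕ) (v : V) : ℕ :=
  Nat.findGreatest (fun s => ∃ S : Finset V, IsAugCoreSet G A E s S ∧ v ∈ S)
    (Fintype.card V + Finset.univ.sup E)

end

/-! Both coreness functions are `Nat.findGreatest`s of antitone predicates, so each is pinned down
by `j ≤ coreness ↔ membership at level j`, and correctness reduces to comparing memberships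
level by level. Inside the `k`-core `C`, every `j`-core with `j ≥ k` already lies in `C`. Outside
`C`, an augmented `s`-core glued to `C` is a core of degree `min s k`, which must be `s` since
`v ∉ C`; conversely, removing `C` from an `s`-core leaves an augmented `s`-core, the lost
neighbours being counted by the external information. -/

section CoreSets

variable {V : Type*} {G : SimpleGraph V} {S : Finset V} {j k : ℕ}

lemma restrictG_le (A : Finset V) : restrictG G A ≤ G := fun _ _ h => h.1

lemma IsCoreSet.mono {H : SimpleGraph V} (hS : IsCoreSet G k S) (hGH : G ≤ H) (hjk : j ≤ k) :
    IsCoreSet H j S :=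
  fun v hv => hjk.trans <| (hS v hv).trans <|
    card_le_card <| monotone_filter_right S fun _ _ h => hGH h

lemma IsCoreSet.restrictG {A : Finset V} (hS : IsCoreSet G k S) (hSA : S ⊆ A) :
    IsCoreSet (restrictG G A) k S := by
  intro v hv
  refine (hS v hv).trans (card_le_card fun w hw => ?_)
  rw [mem_filter] at hw ⊢
  exact ⟨hw.1, hw.2, hSA hv, hSA hw.1⟩

end CoreSets

section Coreness

variable {V : Type*} [Fintype V] {G : SimpleGraph V} {j k : ℕ} {v : V}

lemma mem_coreSet_iff : v ∈ coreSet G k ↔ ∃ S : Finset V, IsCoreSet G k S ∧ v ∈ S := by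
  simp [coreSet]

lemma IsCoreSet.subset_coreSet {S : Finset V} (hS : IsCoreSet G k S) : S ⊆ coreSet G k :=
  fun _ hv => mem_coreSet_iff.2 ⟨S, hS, hv⟩

lemma isCoreSet_coreSet (G : SimpleGraph V) (k : ℕ) : IsCoreSet G k (coreSet G k) := by
  intro v hv
  obtain ⟨S, hS, hvS⟩ := mem_coreSet_iff.1 hv
  exact (hS v hvS).trans (card_le_card (filter_subset_filter _ hS.subset_coreSet))

lemma coreSet_mono {H : SimpleGraph V} (hGH : G ≤ H) (hjk : j ≤ k) :
    coreSet G k ⊆ coreSet H j :=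
  ((isCoreSet_coreSet G k).mono hGH hjk).subset_coreSet

lemma le_coreness_iff : j ≤ coreness G v ↔ v ∈ coreSet G j := by
  refine ⟨fun h => coreSet_mono le_rfl h ?_, fun h => Nat.le_findGreatest ?_ h⟩
  · have h0 : v ∈ coreSet G 0 :=
      mem_coreSet_iff.2 ⟨{v}, fun _ _ => Nat.zero_le _, mem_singleton_self v⟩
    exact Nat.findGreatest_spec (P := fun k => v ∈ coreSet G k) (Nat.zero_le _) h0
  · exact (isCoreSet_coreSet G j v h).trans (card_le_univ _)

lemma le_augCoreness_iff {A : Finset V} {E : V → ℕ} {s : ℕ} (hv : v ∈ A) :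
    s ≤ augCoreness G A E v ↔ ∃ S : Finset V, IsAugCoreSet G A E s S ∧ v ∈ S := by
  refine ⟨fun h => ?_, fun ⟨S, hS, hvS⟩ => Nat.le_findGreatest ?_ ⟨S, hS, hvS⟩⟩
  · have h0 : ∃ S : Finset V, IsAugCoreSet G A E 0 S ∧ v ∈ S :=
      ⟨{v}, ⟨singleton_subset_iff.2 hv, fun _ _ => Nat.zero_le _⟩, mem_singleton_self v⟩
    obtain ⟨S, ⟨hSA, hdeg⟩, hvS⟩ := Nat.findGreatest_spec
      (P := fun s => ∃ S : Finset V, IsAugCoreSet G A E s S ∧ v ∈ S) (Nat.zero_le _) h0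
    exact ⟨S, ⟨hSA, fun u hu => h.trans (hdeg u hu)⟩, hvS⟩
  · calc s ≤ E v + #(S.filter (G.Adj v)) := hS.2 v hvS
      _ ≤ Fintype.card V + univ.sup E := by
        rw [add_comm]; exact add_le_add (card_le_univ _) (le_sup (mem_univ v))

lemma IsAugCoreSet.union_isCoreSet {C S : Finset V} {s : ℕ}
    (hS : IsAugCoreSet G Cᶜ (fun u => #(C.filter (G.Adj u))) s S) (hC : IsCoreSet G k C) :
    IsCoreSet G (min s k) (S ∪ C) := by
  intro u hu
  rcases mem_union.1 hu with huS | huC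
  · have hdisj : Disjoint (C.filter (G.Adj u)) (S.filter (G.Adj u)) :=
      disjoint_filter_filter (disjoint_right.2 fun _ hw => mem_compl.1 (hS.1 hw))
    calc min s k ≤ #(C.filter (G.Adj u)) + #(S.filter (G.Adj u)) :=
          (min_le_left _ _).trans (hS.2 u huS)
      _ = #((C ∪ S).filter (G.Adj u)) := by rw [filter_union, card_union_of_disjoint hdisj]
      _ = #((S ∪ C).filter (G.Adj u)) := by rw [union_comm]
  · exact (min_le_right _ _).trans <|
      (hC u huC).trans (card_le_card (filter_subset_filter _ subset_union_right))

lemma IsCoreSet.sdiff_isAugCoreSet {C S : Finset V} {s : ℕ} (hS : IsCoreSet G s S) :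
    IsAugCoreSet G Cᶜ (fun u => #(C.filter (G.Adj u))) s (S \ C) := by
  refine ⟨fun u hu => mem_compl.2 (mem_sdiff.1 hu).2, fun u hu => ?_⟩
  calc s ≤ #(S.filter (G.Adj u)) := hS u (mem_sdiff.1 hu).1
    _ ≤ #(C.filter (G.Adj u) ∪ (S \ C).filter (G.Adj u)) := by
        rw [← filter_union, union_sdiff_self_eq_union]
        exact card_le_card (filter_subset_filter _ subset_union_right)
    _ ≤ #(C.filter (G.Adj u)) + #((S \ C).filter (G.Adj u)) := card_union_le _ _

lemma coreness_restrictG_coreSet (hv : v ∈ coreSet G k) :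
    coreness (restrictG G (coreSet G k)) v = coreness G v := by
  refine eq_of_forall_le_iff fun j => ?_
  rw [le_coreness_iff, le_coreness_iff]
  refine ⟨fun h => coreSet_mono (restrictG_le _) le_rfl h, fun h => ?_⟩
  have hmax : v ∈ coreSet G (max j k) := by rcases max_choice j k with h' | h' <;> rwa [h']
  have hcore := (isCoreSet_coreSet G (max j k)).restrictG (coreSet_mono le_rfl (le_max_right j k))
  exact coreSet_mono le_rfl (le_max_left j k) (hcore.subset_coreSet hmax)

lemma augCoreness_compl_coreSet (hv : v ∉ coreSet G k) :
    augCoreness G (coreSet G k)ᶜ (extInfo G k) v = coreness G v := by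
  refine eq_of_forall_le_iff fun s => ?_
  rw [le_augCoreness_iff (mem_compl.2 hv), le_coreness_iff]
  constructor
  · rintro ⟨S, hS, hvS⟩
    have hglued := mem_coreSet_iff.2
      ⟨_, hS.union_isCoreSet (isCoreSet_coreSet G k), mem_union_left _ hvS⟩
    rcases min_choice s k with h | h <;> rw [h] at hglued
    · exact hglued
    · exact absurd hglued hv
  · intro h
    obtain ⟨S, hS, hvS⟩ := mem_coreSet_iff.1 h
    exact ⟨S \ coreSet G k, hS.sdiff_isAugCoreSet, mem_sdiff.2 ⟨hvS, hv⟩⟩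

end Coreness

variable {V : Type*} [Fintype V]

theorem divide_and_conquer_correct (G : SimpleGraph V) (k : ℕ) (result : V → ℕ)
    (h1 : ∀ v ∈ coreSet G k, result v = coreness (restrictG G (coreSet G k)) v)
    (h2 : ∀ v ∉ coreSet G k,
      result v = augCoreness G (coreSet G k)ᶜ (extInfo G k) v) :
    ∀ v : V, result v = coreness G v := by
  intro v
  by_cases hv : v ∈ coreSet G k
  · rw [h1 v hv, coreness_restrictG_coreSet hv]
  · rw [h2 v hv, augCoreness_compl_coreSet hv]
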